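/- arXiv:2504.01721 — 2 statements merged into one kernel-verified Lean document; each statement's English description precedes it below -/
import Mathlib

section
/- Let θ ∈ (0,1), c ∈ [0, θ/4], b ≥ 0, 0 < a < 1 − 2c − θ, and η^g, η^f ≥ 0. Fix x, g ∈ ℝⁿ and λ ∈ (0, λ̄_θ], where λ̄_θ = 2(1 − θ − a − 2c)/(L + 2b + 1). Put x(λ) = prox_{λh}(x − λg). Assume the gradient-inexactness condition ‖g − ∇f(x)‖² ≤ (η^g)² + (a²/λ² + b²)‖x(λ) − x‖², and that the inexact function values fₓ, f_λ ∈ ℝ satisfy |fₓ − f(x)| ≤ η^f + (c/λ)‖x(λ) − x‖² and |f_λ − f(x(λ))| ≤ η^f + (c/λ)‖x(λ) − x‖². Then the line-search condition f_λ + h(x(λ)) ≤ fₓ + h(x) − (θ/λ)‖x(λ) − x‖² + ν holds, where ν = Υ₁(λ)(η^g)² + 2η^f. -/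
/-!
The prox point `x(λ)` minimises the `1/λ`-strongly convex function
`y ↦ ‖y - (x - λ g)‖² / (2λ) + h y`, so comparing it with `x` gives
`h x(λ) + ⟪g, x(λ) - x⟫ + ‖x(λ) - x‖² / λ ≤ h x`. The descent lemma bounds `f x(λ)` by the
linearisation at `x` plus `L/2 ‖x(λ) - x‖²`; replacing `∇f x` by `g` costs
`‖g - ∇f x‖ ‖x(λ) - x‖`, which Young's inequality with weight `Υ₁(λ)` splits into
`Υ₁(λ) (η^g)² + (a/λ + b) ‖x(λ) - x‖²`. The step-size bound `λ ≤ λ̄_θ` is exactly what makes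
the remaining multiple of `‖x(λ) - x‖²` at most `-θ/λ`.
-/

open RealInnerProductSpace Set

/-- `Υ₁(λ)`: the error-weighting constant from the paper. -/
noncomputable def Ups1 (a b lam : ℝ) : ℝ :=
  if a = 0 ∧ b = 0 then 1 / 2
  else if b = 0 then lam / (2 * a)
  else if a = 0 then 1 / (2 * b)
  else min (lam / (2 * a)) (1 / (2 * b))

section InnerProductSpace

variable {E : Type*} [NormedAddCommGroup E] [InnerProductSpace ℝ E]

theorem le_add_inner_gradient_add_sq_of_lipschitz_gradient [CompleteSpace E] {f : E → ℝ}
    (hf : Differentiable ℝ f)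
    {L : ℝ} (hlip : ∀ u v, ‖gradient f u - gradient f v‖ ≤ L * ‖u - v‖) (x y : E) :
    f y ≤ f x + ⟪gradient f x, y - x⟫ + L / 2 * ‖y - x‖ ^ 2 := by
  set v := y - x
  -- `φ` is antitone on `[0, ∞)`, and `φ 1 ≤ φ 0` is the claim.
  set φ : ℝ → ℝ := fun t => f (x + t • v) - t * ⟪gradient f x, v⟫ - L / 2 * ‖v‖ ^ 2 * t ^ 2
  have hφ : ∀ t, HasDerivAt φ (⟪gradient f (x + t • v), v⟫ - ⟪gradient f x, v⟫
      - L * ‖v‖ ^ 2 * t) t := by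
    intro t
    have hline : HasDerivAt (fun s : ℝ => x + s • v) v t :=
      (((hasDerivAt_id t).smul_const v).const_add x).congr_deriv (one_smul ℝ v)
    have hcomp := (hf (x + t • v)).hasGradientAt.hasFDerivAt.comp_hasDerivAt t hline
    refine ((hcomp.sub ((hasDerivAt_id t).mul_const _)).sub
      ((hasDerivAt_pow 2 t).const_mul (L / 2 * ‖v‖ ^ 2))).congr_deriv ?_
    simp only [InnerProductSpace.toDual_apply_apply, one_mul]
    ring
  have hφ_nonpos : ∀ t ∈ interior (Ici (0 : ℝ)),
      ⟪gradient f (x + t • v), v⟫ - ⟪gradient f x, v⟫ - L * ‖v‖ ^ 2 * t ≤ 0 := by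
    intro t ht
    rw [interior_Ici, mem_Ioi] at ht
    rw [sub_nonpos]
    have hgrad : ‖gradient f (x + t • v) - gradient f x‖ ≤ L * (t * ‖v‖) := by
      simpa [norm_smul, abs_of_pos ht] using hlip (x + t • v) x
    calc ⟪gradient f (x + t • v), v⟫ - ⟪gradient f x, v⟫
        = ⟪gradient f (x + t • v) - gradient f x, v⟫ := (inner_sub_left _ _ _).symm
      _ ≤ ‖gradient f (x + t • v) - gradient f x‖ * ‖v‖ := real_inner_le_norm _ _
      _ ≤ L * (t * ‖v‖) * ‖v‖ := by gcongr
      _ = L * ‖v‖ ^ 2 * t := by ring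
  have hanti := antitoneOn_of_hasDerivWithinAt_nonpos (convex_Ici 0)
    (fun t _ => (hφ t).continuousAt.continuousWithinAt)
    (fun t _ => (hφ t).hasDerivWithinAt) hφ_nonpos
  have h10 : φ 1 ≤ φ 0 := hanti (mem_Ici.2 le_rfl) (by norm_num : (1 : ℝ) ∈ Ici 0) zero_le_one
  simp only [φ, v, one_smul, add_sub_cancel, zero_smul, add_zero] at h10
  linarith

theorem norm_one_sub_smul_add_smul_sq (X Y : E) (b : ℝ) :
    ‖(1 - b) • X + b • Y‖ ^ 2 = (1 - b) * ‖X‖ ^ 2 + b * ‖Y‖ ^ 2 - (1 - b) * b * ‖X - Y‖ ^ 2 := by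
  rw [norm_add_sq_real, norm_sub_sq_real, norm_smul, norm_smul, real_inner_smul_left,
    real_inner_smul_right, Real.norm_eq_abs, Real.norm_eq_abs, mul_pow, mul_pow, sq_abs, sq_abs]
  ring

theorem strongConvexOn_univ_mul_norm_sub_sq (c : ℝ) (u : E) :
    StrongConvexOn univ (2 * c) fun y => c * ‖y - u‖ ^ 2 := by
  refine ⟨convex_univ, fun x _ y _ a b _ _ hab => ?_⟩
  obtain rfl : a = 1 - b := eq_sub_of_add_eq hab
  have hcomb : (1 - b) • x + b • y - u = (1 - b) • (x - u) + b • (y - u) := by module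
  have hdiff : x - y = (x - u) - (y - u) := by abel
  simp only [smul_eq_mul]
  rw [hcomb, hdiff, norm_one_sub_smul_add_smul_sq]
  exact (by ring : _ = _).le

theorem StrongConvexOn.add_sq_le_of_isMinOn {s : Set E} {m : ℝ} {F : E → ℝ}
    (hF : StrongConvexOn s m F) {p x : E} (hp : p ∈ s) (hx : x ∈ s) (hmin : IsMinOn F s p) :
    F p + m / 2 * ‖x - p‖ ^ 2 ≤ F x := by
  have hsegment : ∀ t ∈ Ioo (0 : ℝ) 1, F p + (1 - t) * (m / 2 * ‖x - p‖ ^ 2) ≤ F x := by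
    rintro t ⟨ht0, ht1⟩
    have hconv := hF.2 hp hx (sub_nonneg.2 ht1.le) ht0.le (sub_add_cancel 1 t)
    have hle := isMinOn_iff.1 hmin _ (hF.1 hp hx (sub_nonneg.2 ht1.le) ht0.le (sub_add_cancel 1 t))
    rw [norm_sub_rev] at hconv
    simp only [smul_eq_mul] at hconv
    refine le_of_mul_le_mul_left ?_ ht0
    linarith
  have hlim : Filter.Tendsto (fun t : ℝ => F p + (1 - t) * (m / 2 * ‖x - p‖ ^ 2))
      (nhdsWithin 0 (Ioi 0)) (nhds (F p + m / 2 * ‖x - p‖ ^ 2)) :=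
    (Continuous.tendsto' (by fun_prop) 0 _ (by simp)).mono_left nhdsWithin_le_nhds
  exact le_of_tendsto hlim (Filter.eventually_of_mem (Ioo_mem_nhdsGT zero_lt_one) hsegment)

theorem ConvexOn.add_inner_add_sq_le_of_isMinOn_prox {h : E → ℝ} (hh : ConvexOn ℝ univ h)
    {lam : ℝ} (hlam : 0 < lam) {x g p : E}
    (hp : IsMinOn (fun y => 1 / (2 * lam) * ‖y - (x - lam • g)‖ ^ 2 + h y) univ p) :
    h p + ⟪g, p - x⟫ + 1 / lam * ‖p - x‖ ^ 2 ≤ h x := by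
  have hF : StrongConvexOn univ (2 * (1 / (2 * lam)))
      fun y => 1 / (2 * lam) * ‖y - (x - lam • g)‖ ^ 2 + h y := by
    have hsum := (strongConvexOn_univ_mul_norm_sub_sq (1 / (2 * lam)) (x - lam • g)).add
      hh.uniformConvexOn_zero
    rwa [add_zero] at hsum
  have hgrowth := hF.add_sq_le_of_isMinOn (mem_univ p) (mem_univ x) hp
  have hp_sub : p - (x - lam • g) = (p - x) + lam • g := by abel
  have hx_sub : x - (x - lam • g) = lam • g := by abel
  rw [hp_sub, hx_sub, norm_add_sq_real, real_inner_smul_right, norm_smul, Real.norm_eq_abs,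
    abs_of_pos hlam, norm_sub_rev x p, real_inner_comm] at hgrowth
  calc h p + ⟪g, p - x⟫ + 1 / lam * ‖p - x‖ ^ 2
      = 1 / (2 * lam) * (‖p - x‖ ^ 2 + 2 * (lam * ⟪g, p - x⟫) + (lam * ‖g‖) ^ 2) + h p
        + 2 * (1 / (2 * lam)) / 2 * ‖p - x‖ ^ 2 - 1 / (2 * lam) * (lam * ‖g‖) ^ 2 := by
        field_simp; ring
    _ ≤ h x := by linarith

end InnerProductSpace

section Ups1

variable {a b lam : ℝ}

theorem Ups1_eq_one_div_max (ha : 0 ≤ a) (hb : 0 ≤ b) (hab : ¬(a = 0 ∧ b = 0))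
    (hlam : 0 < lam) : Ups1 a b lam = 1 / (2 * max (a / lam) b) := by
  rw [Ups1, if_neg hab]
  rcases hb.eq_or_lt with rfl | hb'
  · have ha' : 0 < a := ha.lt_of_ne' fun h => hab ⟨h, rfl⟩
    rw [if_pos rfl, max_eq_left (by positivity)]
    field_simp
  rw [if_neg hb'.ne']
  rcases ha.eq_or_lt with rfl | ha'
  · rw [if_pos rfl, zero_div, max_eq_right hb]
  rw [if_neg ha'.ne', show lam / (2 * a) = 1 / (2 * (a / lam)) by field_simp]
  rcases le_total (a / lam) b with hle | hle
  · rw [max_eq_right hle, min_eq_right (one_div_le_one_div_of_le (by positivity) (by linarith))]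
  · rw [max_eq_left hle, min_eq_left (one_div_le_one_div_of_le (by positivity) (by linarith))]

theorem mul_le_Ups1_mul_sq_add (ha : 0 ≤ a) (hb : 0 ≤ b) (hab : ¬(a = 0 ∧ b = 0))
    (hlam : 0 < lam) {e t η : ℝ} (h : e ^ 2 ≤ η ^ 2 + (a ^ 2 / lam ^ 2 + b ^ 2) * t ^ 2) :
    e * t ≤ Ups1 a b lam * η ^ 2 + (a / lam + b) * t ^ 2 := by
  rw [Ups1_eq_one_div_max ha hb hab hlam]
  set A := a / lam
  set M := max A b
  have hA : 0 ≤ A := by positivity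
  have hM : 0 < M := by
    rcases not_and_or.1 hab with ha' | hb'
    · exact lt_max_of_lt_left (div_pos (ha.lt_of_ne' ha') hlam)
    · exact lt_max_of_lt_right (hb.lt_of_ne' hb')
  have hAM : A ≤ M := le_max_left _ _
  have hbM : b ≤ M := le_max_right _ _
  have hMsum : M ≤ A + b := max_le (by linarith) (by linarith)
  rw [← div_pow] at h
  -- Young's inequality `2 M e t ≤ e² + M² t²`, then `A² + b² + M² ≤ 2 M (A + b)`.
  rw [div_mul_eq_mul_div, one_mul, div_add' _ _ _ (by positivity), le_div_iff₀ (by positivity)]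
  nlinarith [sq_nonneg (e - M * t), mul_le_mul_of_nonneg_left hAM hA,
    mul_le_mul_of_nonneg_left hbM hb, mul_le_mul_of_nonneg_left hMsum hM.le]

end Ups1

theorem stmt3_general {n : ℕ}
    (f h : EuclideanSpace ℝ (Fin n) → ℝ)
    (hconv : ConvexOn ℝ Set.univ h)
    (hf : Differentiable ℝ f)
    (L : ℝ) (hL : 0 < L)
    (hlip : ∀ u v : EuclideanSpace ℝ (Fin n),
      ‖gradient f u - gradient f v‖ ≤ L * ‖u - v‖)
    (prox : ℝ → EuclideanSpace ℝ (Fin n) → EuclideanSpace ℝ (Fin n))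
    (hprox : ∀ lam : ℝ, 0 < lam → ∀ u y : EuclideanSpace ℝ (Fin n),
      1 / (2 * lam) * ‖prox lam u - u‖ ^ 2 + h (prox lam u)
        ≤ 1 / (2 * lam) * ‖y - u‖ ^ 2 + h y)
    (θ c a b ηg ηf : ℝ)
    (hb : 0 ≤ b)
    (ha0 : 0 < a)
    (lam : ℝ) (hlam0 : 0 < lam)
    (hlam1 : lam ≤ 2 * (1 - θ - a - 2 * c) / (L + 2 * b + 1))
    (x g : EuclideanSpace ℝ (Fin n))
    (xlam : EuclideanSpace ℝ (Fin n)) (hxlam : xlam = prox lam (x - lam • g))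
    (hgrad : ‖g - gradient f x‖ ^ 2
      ≤ ηg ^ 2 + (a ^ 2 / lam ^ 2 + b ^ 2) * ‖xlam - x‖ ^ 2)
    (fx flam : ℝ)
    (hfx : |fx - f x| ≤ ηf + c / lam * ‖xlam - x‖ ^ 2)
    (hflam : |flam - f xlam| ≤ ηf + c / lam * ‖xlam - x‖ ^ 2) :
    flam + h xlam ≤ fx + h x - θ / lam * ‖xlam - x‖ ^ 2
      + (Ups1 a b lam * ηg ^ 2 + 2 * ηf) := by
  have hmin : IsMinOn (fun y => 1 / (2 * lam) * ‖y - (x - lam • g)‖ ^ 2 + h y) univ xlam :=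
    isMinOn_univ_iff.2 fun y => hxlam ▸ hprox lam hlam0 _ y
  have hprox_step := hconv.add_inner_add_sq_le_of_isMinOn_prox hlam0 hmin
  have hdescent := le_add_inner_gradient_add_sq_of_lipschitz_gradient hf hlip x xlam
  have herror : ⟪gradient f x - g, xlam - x⟫
      ≤ Ups1 a b lam * ηg ^ 2 + (a / lam + b) * ‖xlam - x‖ ^ 2 :=
    (real_inner_le_norm _ _).trans <| mul_le_Ups1_mul_sq_add ha0.le hb
      (fun hab => ha0.ne' hab.1) hlam0 (by rwa [norm_sub_rev])
  have hstep : (L / 2 + b) * lam ≤ 1 - θ - a - 2 * c := by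
    have := (le_div_iff₀ (by positivity)).1 hlam1
    linarith
  have hcoef : (L / 2 + b + (a + 2 * c) / lam) * ‖xlam - x‖ ^ 2
      ≤ (1 - θ) / lam * ‖xlam - x‖ ^ 2 := by
    gcongr
    rw [le_div_iff₀ hlam0, add_mul, div_mul_cancel₀ _ hlam0.ne']
    linarith
  rw [inner_sub_left] at herror
  linear_combination (abs_le.1 hflam).2 + hdescent + herror + hprox_step + (abs_le.1 hfx).1 + hcoef

/-- the first line-search condition holds for all `λ ∈ (0, λ̄_θ]`,
where `λ̄_θ = 2(1 - θ - a - 2c)/(L + 2b + 1)`. -/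
theorem stmt3 {n : ℕ}
    (f h : EuclideanSpace ℝ (Fin n) → ℝ)
    (hconv : ConvexOn ℝ Set.univ h)
    (hf : Differentiable ℝ f)
    (L : ℝ) (hL : 0 < L)
    (hlip : ∀ u v : EuclideanSpace ℝ (Fin n),
      ‖gradient f u - gradient f v‖ ≤ L * ‖u - v‖)
    (prox : ℝ → EuclideanSpace ℝ (Fin n) → EuclideanSpace ℝ (Fin n))
    (hprox : ∀ lam : ℝ, 0 < lam → ∀ u y : EuclideanSpace ℝ (Fin n),
      1 / (2 * lam) * ‖prox lam u - u‖ ^ 2 + h (prox lam u)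
        ≤ 1 / (2 * lam) * ‖y - u‖ ^ 2 + h y)
    (θ c a b ηg ηf : ℝ)
    (hθ0 : 0 < θ) (hθ1 : θ < 1)
    (hc0 : 0 ≤ c) (hc1 : c ≤ θ / 4)
    (hb : 0 ≤ b)
    (ha0 : 0 < a) (ha1 : a < 1 - 2 * c - θ)
    (hηg : 0 ≤ ηg) (hηf : 0 ≤ ηf)
    (lam : ℝ) (hlam0 : 0 < lam)
    (hlam1 : lam ≤ 2 * (1 - θ - a - 2 * c) / (L + 2 * b + 1))
    (x g : EuclideanSpace ℝ (Fin n))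
    (xlam : EuclideanSpace ℝ (Fin n)) (hxlam : xlam = prox lam (x - lam • g))
    (hgrad : ‖g - gradient f x‖ ^ 2
      ≤ ηg ^ 2 + (a ^ 2 / lam ^ 2 + b ^ 2) * ‖xlam - x‖ ^ 2)
    (fx flam : ℝ)
    (hfx : |fx - f x| ≤ ηf + c / lam * ‖xlam - x‖ ^ 2)
    (hflam : |flam - f xlam| ≤ ηf + c / lam * ‖xlam - x‖ ^ 2) :
    flam + h xlam ≤ fx + h x - θ / lam * ‖xlam - x‖ ^ 2
      + (Ups1 a b lam * ηg ^ 2 + 2 * ηf) :=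
  stmt3_general f h hconv hf L hL hlip prox hprox θ c a b ηg ηf hb ha0 lam hlam0 hlam1 x g xlam
    hxlam hgrad fx flam hfx hflam
end

section
/- Assume f is convex, differentiable, and ∇f is L-Lipschitz on ℝⁿ. Let a, b ≥ 0, λ_max > 0, 0 < λ ≤ λ_max, x, g ∈ ℝⁿ, x⁺ = prox_{λh}(x − λg), and G = λ⁻¹(x − x⁺). Suppose ‖g − ∇f(x)‖ ≤ (a + bλ)‖G‖, and let x* ∈ ℝⁿ and B₂ ≥ ‖x⁺ − x*‖. Then, with F = f + h, F(x⁺) − F(x*) ≤ B₂((L + b)λ_max + a + 1)‖G‖. -/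
/-!
The prox step gives the variational inequality `h x⁺ - h x* ≤ ⟪G - g, x⁺ - x*⟫`, and convexity
of `f` gives `f x⁺ - f x* ≤ ⟪∇f x⁺, x⁺ - x*⟫`; hence `F x⁺ - F x* ≤ ‖∇f x⁺ - g + G‖ B₂`.
Since `x - x⁺ = λ G`, the triangle inequality through `∇f x` bounds
`‖∇f x⁺ - g + G‖ ≤ (L λ + a + b λ + 1) ‖G‖`.
Both first-order inequalities are obtained by restricting to the segment towards the comparison
point and differentiating at its left end.
-/

open RealInnerProductSpace Set AffineMap

lemma ConvexOn.le_lineMap {E : Type*} [AddCommGroup E] [Module ℝ E] {k : E → ℝ}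
    (hk : ConvexOn ℝ univ k) (x y : E) {t : ℝ}
    (ht : t ∈ Icc (0 : ℝ) 1) : k (lineMap x y t) ≤ k x + t * (k y - k x) := by
  have := hk.2 (mem_univ x) (mem_univ y) (sub_nonneg.2 ht.2) ht.1 (sub_add_cancel 1 t)
  rw [lineMap_apply_module]
  simp only [smul_eq_mul] at this
  linarith

section NormedSpace

variable {E : Type*} [NormedAddCommGroup E] [NormedSpace ℝ E]

theorem ConvexOn.fderiv_le_sub {f : E → ℝ} {f' : E →L[ℝ] ℝ} {x : E} (hf : ConvexOn ℝ univ f)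
    (hf' : HasFDerivAt f f' x) (y : E) : f' (y - x) ≤ f y - f x := by
  have hderiv : HasDerivAt (f ∘ (lineMap x y : ℝ → E)) (f' (y - x)) 0 :=
    hf'.comp_hasDerivAt_of_eq (0 : ℝ) hasDerivAt_lineMap (lineMap_apply_zero x y).symm
  simpa [slope] using (hf.comp_affineMap (lineMap x y)).le_slope_of_hasDerivAt
    (mem_univ 0) (mem_univ 1) one_pos hderiv

theorem IsMinOn.neg_fderiv_le_of_add_convexOn {q k : E → ℝ} {q' : E →L[ℝ] ℝ} {p : E}
    (hmin : IsMinOn (q + k) univ p) (hk : ConvexOn ℝ univ k) (hq : HasFDerivAt q q' p) (y : E) :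
    -q' (y - p) ≤ k y - k p := by
  set ψ : ℝ → ℝ := fun t => q (lineMap p y t) + t * (k y - k p)
  have hψ : HasDerivAt ψ (q' (y - p) + 1 * (k y - k p)) 0 :=
    (hq.comp_hasDerivAt_of_eq (0 : ℝ) hasDerivAt_lineMap (lineMap_apply_zero p y).symm).add
      ((hasDerivAt_id (0 : ℝ)).mul_const (k y - k p))
  have hψmin : IsMinOn ψ (Icc 0 1) 0 := by
    intro t ht
    have hmin_t := hmin (mem_univ (lineMap p y t))
    have hconv_t := hk.le_lineMap p y ht
    simp only [mem_ofPred_eq, Pi.add_apply] at hmin_t ⊢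
    simp only [ψ, lineMap_apply_zero, zero_mul, add_zero]
    linarith
  have := hψmin.localize.hasFDerivWithinAt_nonneg hψ.hasFDerivAt.hasFDerivWithinAt
    (mem_posTangentConeAt_of_segment_subset (by rw [zero_add, segment_eq_Icc zero_le_one]))
  simp only [ContinuousLinearMap.toSpanSingleton_apply, smul_eq_mul, one_mul] at this
  linarith

end NormedSpace

section InnerProductSpace

variable {E : Type*} [NormedAddCommGroup E] [InnerProductSpace ℝ E]

theorem ConvexOn.inner_gradient_le_sub [CompleteSpace E] {f : E → ℝ} {x : E}
    (hf : ConvexOn ℝ univ f) (hfx : DifferentiableAt ℝ f x) (y : E) :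
    ⟪gradient f x, y - x⟫ ≤ f y - f x := by
  simpa using hf.fderiv_le_sub hfx.hasGradientAt.hasFDerivAt y

/-- `p = prox_{lam h} u`. -/
def IsProx (lam : ℝ) (h : E → ℝ) (u p : E) : Prop :=
  ∀ y, 1 / (2 * lam) * ‖p - u‖ ^ 2 + h p ≤ 1 / (2 * lam) * ‖y - u‖ ^ 2 + h y

theorem IsProx.inner_sub_le {lam : ℝ} {h : E → ℝ} {u p : E} (hp : IsProx lam h u p)
    (hh : ConvexOn ℝ univ h) (hlam : 0 < lam) (y : E) :
    ⟪u - p, y - p⟫ ≤ lam * (h y - h p) := by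
  have hq : HasFDerivAt (fun z => 1 / (2 * lam) * ‖z - u‖ ^ 2)
      ((1 / (2 * lam)) • (2 • innerSL ℝ (p - u))) p := by
    simpa using ((hasFDerivAt_id p).sub_const u).norm_sq.const_mul (1 / (2 * lam))
  have hmin : IsMinOn ((fun z => 1 / (2 * lam) * ‖z - u‖ ^ 2) + h) univ p :=
    isMinOn_univ_iff.2 hp
  have key := hmin.neg_fderiv_le_of_add_convexOn hh hq y
  have hinner : ⟪u - p, y - p⟫ = -⟪p - u, y - p⟫ := by rw [← inner_neg_left, neg_sub]
  simp only [smul_apply, innerSL_apply_apply, smul_eq_mul, nsmul_eq_mul,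
    Nat.cast_ofNat] at key
  rw [hinner]
  field_simp at key
  linarith

theorem IsProx.sub_le_inner_gradient_step [CompleteSpace E] {f h : E → ℝ} {lam : ℝ}
    {x g xp : E} (hxp : IsProx lam h (x - lam • g) xp) (hf : ConvexOn ℝ univ f)
    (hfxp : DifferentiableAt ℝ f xp) (hh : ConvexOn ℝ univ h) (hlam : 0 < lam) (z : E) :
    f xp + h xp - (f z + h z) ≤ ⟪gradient f xp - g + lam⁻¹ • (x - xp), xp - z⟫ := by
  have hstep : x - lam • g - xp = lam • (lam⁻¹ • (x - xp) - g) := by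
    rw [smul_sub, smul_inv_smul₀ hlam.ne']
    abel
  have hprox := hxp.inner_sub_le hh hlam z
  rw [hstep, real_inner_smul_left] at hprox
  have hgrad := hf.inner_gradient_le_sub hfxp z
  have hprox' : ⟪lam⁻¹ • (x - xp) - g, z - xp⟫ ≤ h z - h xp := le_of_mul_le_mul_left hprox hlam
  have hflip : ∀ v : E, ⟪v, xp - z⟫ = -⟪v, z - xp⟫ := fun v => by rw [← inner_neg_right, neg_sub]
  have hsplit : gradient f xp - g + lam⁻¹ • (x - xp)
      = gradient f xp + (lam⁻¹ • (x - xp) - g) := by abel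
  rw [hsplit, inner_add_left, hflip, hflip]
  linarith

end InnerProductSpace

theorem stmt12_general {n : ℕ}
    (f h : EuclideanSpace ℝ (Fin n) → ℝ)
    (hconv : ConvexOn ℝ Set.univ h)
    (hfconv : ConvexOn ℝ Set.univ f)
    (hf : Differentiable ℝ f)
    (L : ℝ) (hL : 0 < L)
    (hlip : ∀ u v : EuclideanSpace ℝ (Fin n),
      ‖gradient f u - gradient f v‖ ≤ L * ‖u - v‖)
    (prox : ℝ → EuclideanSpace ℝ (Fin n) → EuclideanSpace ℝ (Fin n))
    (hprox : ∀ lam : ℝ, 0 < lam → ∀ u y : EuclideanSpace ℝ (Fin n),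
      1 / (2 * lam) * ‖prox lam u - u‖ ^ 2 + h (prox lam u)
        ≤ 1 / (2 * lam) * ‖y - u‖ ^ 2 + h y)
    (a b lamMax : ℝ) (hb : 0 ≤ b)
    (lam : ℝ) (hlam0 : 0 < lam) (hlam1 : lam ≤ lamMax)
    (x g : EuclideanSpace ℝ (Fin n))
    (xp : EuclideanSpace ℝ (Fin n)) (hxp : xp = prox lam (x - lam • g))
    (G : EuclideanSpace ℝ (Fin n)) (hG : G = lam⁻¹ • (x - xp))
    (hgrad : ‖g - gradient f x‖ ≤ (a + b * lam) * ‖G‖)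
    (xstar : EuclideanSpace ℝ (Fin n)) (B2 : ℝ) (hB2 : ‖xp - xstar‖ ≤ B2)
    (F : EuclideanSpace ℝ (Fin n) → ℝ) (hF : ∀ y, F y = f y + h y) :
    F xp - F xstar ≤ B2 * ((L + b) * lamMax + a + 1) * ‖G‖ := by
  have hgap : F xp - F xstar ≤ ⟪gradient f xp - g + G, xp - xstar⟫ := by
    rw [hF, hF, hG]
    exact IsProx.sub_le_inner_gradient_step (hxp ▸ hprox lam hlam0 _) hfconv (hf xp) hconv
      hlam0 xstar
  have hxG : ‖xp - x‖ = lam * ‖G‖ := by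
    rw [norm_sub_rev, hG, norm_smul, Real.norm_eq_abs, abs_inv, abs_of_pos hlam0,
      mul_inv_cancel_left₀ hlam0.ne']
  have hbound : ‖gradient f xp - g + G‖ ≤ ((L + b) * lamMax + a + 1) * ‖G‖ :=
    calc ‖gradient f xp - g + G‖
        = ‖(gradient f xp - gradient f x) + (gradient f x - g) + G‖ := by
          congr 1; abel
      _ ≤ ‖gradient f xp - gradient f x‖ + ‖gradient f x - g‖ + ‖G‖ := norm_add₃_le
      _ ≤ L * (lam * ‖G‖) + (a + b * lam) * ‖G‖ + ‖G‖ := by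
        gcongr
        · exact hxG ▸ hlip xp x
        · rwa [norm_sub_rev]
      _ = ((L + b) * lam + a + 1) * ‖G‖ := by ring
      _ ≤ ((L + b) * lamMax + a + 1) * ‖G‖ := by gcongr
  calc F xp - F xstar ≤ ‖gradient f xp - g + G‖ * ‖xp - xstar‖ :=
        hgap.trans (real_inner_le_norm _ _)
    _ ≤ ((L + b) * lamMax + a + 1) * ‖G‖ * B2 :=
        mul_le_mul hbound hB2 (norm_nonneg _) ((norm_nonneg _).trans hbound)
    _ = B2 * ((L + b) * lamMax + a + 1) * ‖G‖ := by ring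

/-- bound on the optimality gap in terms of the gradient-mapping norm
in the convex case with relative gradient inexactness. -/
theorem stmt12 {n : ℕ}
    (f h : EuclideanSpace ℝ (Fin n) → ℝ)
    (hconv : ConvexOn ℝ Set.univ h)
    (hfconv : ConvexOn ℝ Set.univ f)
    (hf : Differentiable ℝ f)
    (L : ℝ) (hL : 0 < L)
    (hlip : ∀ u v : EuclideanSpace ℝ (Fin n),
      ‖gradient f u - gradient f v‖ ≤ L * ‖u - v‖)
    (prox : ℝ → EuclideanSpace ℝ (Fin n) → EuclideanSpace ℝ (Fin n))
    (hprox : ∀ lam : ℝ, 0 < lam → ∀ u y : EuclideanSpace ℝ (Fin n),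
      1 / (2 * lam) * ‖prox lam u - u‖ ^ 2 + h (prox lam u)
        ≤ 1 / (2 * lam) * ‖y - u‖ ^ 2 + h y)
    (a b lamMax : ℝ) (ha : 0 ≤ a) (hb : 0 ≤ b) (hlamMax : 0 < lamMax)
    (lam : ℝ) (hlam0 : 0 < lam) (hlam1 : lam ≤ lamMax)
    (x g : EuclideanSpace ℝ (Fin n))
    (xp : EuclideanSpace ℝ (Fin n)) (hxp : xp = prox lam (x - lam • g))
    (G : EuclideanSpace ℝ (Fin n)) (hG : G = lam⁻¹ • (x - xp))
    (hgrad : ‖g - gradient f x‖ ≤ (a + b * lam) * ‖G‖)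
    (xstar : EuclideanSpace ℝ (Fin n)) (B2 : ℝ) (hB2 : ‖xp - xstar‖ ≤ B2)
    (F : EuclideanSpace ℝ (Fin n) → ℝ) (hF : ∀ y, F y = f y + h y) :
    F xp - F xstar ≤ B2 * ((L + b) * lamMax + a + 1) * ‖G‖ :=
  stmt12_general f h hconv hfconv hf L hL hlip prox hprox a b lamMax hb lam hlam0 hlam1 x g xp hxp G
    hG hgrad xstar B2 hB2 F hF
end
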